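/- arXiv:1208.2573 — 2 statements merged into one kernel-verified Lean document; each statement's English description precedes it below -/
import Mathlib

section
/- Let f : [a,b] → ℝ (a < b) be such that f′ is absolutely continuous on [a,b], f″ ∈ L¹[a,b], and |f″|^q is s-concave in the second sense on [a,b] for some fixed s ∈ (0,1], where q > 1 and 1/p + 1/q = 1. Then |(1/(b−a))∫_a^b f(t) dt − (1/2)[f((3a+b)/4) + f((a+3b)/4)]| ≤ (2^{(s−1)/q}(b−a)²/(128(2p+1)^{1/p}))[|f″((7a+b)/8)| + 2|f″((a+b)/2)| + |f″((a+7b)/8)|]. -/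
open MeasureTheory

def SConcaveOn (s : ℝ) (D : Set ℝ) (g : ℝ → ℝ) : Prop :=
  ∀ x ∈ D, ∀ y ∈ D, ∀ α β : ℝ, 0 ≤ α → 0 ≤ β → α + β = 1 →
    α ^ s * g x + β ^ s * g y ≤ g (α * x + β * y)

/-!
On a half `[c, d]` of `[a, b]` with midpoint `μ`, integrating by parts twice against the Peano
kernel `(t - c)² / 2` on `[c, μ]` and `(t - d)² / 2` on `[μ, d]` gives `∫_c^d f - (d - c) f(μ)`.
Hölder's inequality bounds each of the four quarter integrals by the `L^p` norm of the kernel,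
computed explicitly, times the `L^q` norm of `f''`. Pairing `t` with its reflection in the quarter
and using s-concavity of `|f''|^q` bounds that `L^q` norm by the value at the quarter's midpoint
(the Hermite–Hadamard step). Finally, s-concavity at `(5a+3b)/8` and `(3a+5b)/8` together with the
power-mean inequality merges the two inner terms into `2 |f''((a+b)/2)|`.
-/

open Set intervalIntegral

namespace SConcaveOn

variable {s q : ℝ} {D : Set ℝ} {g φ : ℝ → ℝ}

theorem add_le_two_rpow_mul_midpoint (hg : SConcaveOn s D g) {x y : ℝ} (hx : x ∈ D)
    (hy : y ∈ D) : g x + g y ≤ 2 ^ s * g ((x + y) / 2) := by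
  have h := hg x hx y hy (1 / 2) (1 / 2) (by norm_num) (by norm_num) (by norm_num)
  rw [show 1 / 2 * x + 1 / 2 * y = (x + y) / 2 by ring] at h
  have h2 : (2 : ℝ) ^ s * (1 / 2) ^ s = 1 := by rw [← Real.mul_rpow] <;> norm_num
  calc g x + g y = 2 ^ s * ((1 / 2) ^ s * g x + (1 / 2) ^ s * g y) := by
        rw [mul_add, ← mul_assoc, ← mul_assoc, h2, one_mul, one_mul]
    _ ≤ 2 ^ s * g ((x + y) / 2) := by gcongr

theorem abs_add_abs_le (hg : SConcaveOn s D fun t => |φ t| ^ q) (hs : s ≤ 1) (hq : 1 ≤ q)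
    {x y : ℝ} (hx : x ∈ D) (hy : y ∈ D) : |φ x| + |φ y| ≤ 2 * |φ ((x + y) / 2)| := by
  have h2s : (2 : ℝ) ^ s ≤ 2 := by
    simpa using Real.rpow_le_rpow_of_exponent_le one_le_two hs
  have hsum : |φ x| ^ q + |φ y| ^ q ≤ 2 * |φ ((x + y) / 2)| ^ q :=
    (hg.add_le_two_rpow_mul_midpoint hx hy).trans (by gcongr)
  have hmean := (convexOn_rpow hq).2 (abs_nonneg (φ x)) (abs_nonneg (φ y))
    (by norm_num : (0 : ℝ) ≤ 1 / 2) (by norm_num : (0 : ℝ) ≤ 1 / 2) (by norm_num)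
  simp only [smul_eq_mul] at hmean
  have hpow : ((|φ x| + |φ y|) / 2) ^ q ≤ |φ ((x + y) / 2)| ^ q := by
    rw [show (|φ x| + |φ y|) / 2 = 1 / 2 * |φ x| + 1 / 2 * |φ y| by ring]
    linarith
  have := (Real.rpow_le_rpow_iff (by positivity) (abs_nonneg _) (by linarith)).1 hpow
  linarith

theorem memLp {a b : ℝ} (hg : SConcaveOn s (Icc a b) fun t => |φ t| ^ q) (hq : 0 < q)
    (hφ : AEStronglyMeasurable φ (volume.restrict (Icc a b))) :
    MemLp φ (ENNReal.ofReal q) (volume.restrict (Icc a b)) := by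
  refine MemLp.of_bound hφ ((2 ^ s * |φ ((a + b) / 2)| ^ q) ^ q⁻¹) ?_
  filter_upwards [ae_restrict_mem measurableSet_Icc] with t ht
  rw [Real.norm_eq_abs, Real.le_rpow_inv_iff_of_pos (abs_nonneg _) (by positivity) hq]
  have h := hg.add_le_two_rpow_mul_midpoint ht (y := a + b - t)
    ⟨by linarith [ht.2], by linarith [ht.1]⟩
  rw [show (t + (a + b - t)) / 2 = (a + b) / 2 by ring] at h
  linarith [Real.rpow_nonneg (abs_nonneg (φ (a + b - t))) q]

end SConcaveOn

theorem aestronglyMeasurable_of_hasDerivAt {F F' : ℝ → ℝ} {S : Set ℝ} (hS : MeasurableSet S)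
    (h : ∀ t ∈ S, HasDerivAt F (F' t) t) : AEStronglyMeasurable F' (volume.restrict S) :=
  (measurable_deriv F).aestronglyMeasurable.congr
    ((ae_restrict_mem hS).mono fun t ht => (h t ht).deriv)

theorem integral_le_of_add_reflect_le {g : ℝ → ℝ} {c d M : ℝ} (hcd : c ≤ d)
    (hg : IntervalIntegrable g volume c d) (h : ∀ t ∈ Icc c d, g t + g (c + d - t) ≤ 2 * M) :
    ∫ t in c..d, g t ≤ (d - c) * M := by
  have hg' : IntervalIntegrable (fun t => g (c + d - t)) volume c d := by
    simpa using (hg.comp_sub_left (c + d)).symm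
  have hrefl : ∫ t in c..d, g (c + d - t) = ∫ t in c..d, g t := by
    simp
  have hsum := integral_mono_on hcd (hg.add hg') intervalIntegrable_const h
  rw [integral_add hg hg', hrefl, intervalIntegral.integral_const, smul_eq_mul] at hsum
  linarith

theorem integral_sq_half_rpow {p : ℝ} (hp : -1 < 2 * p) {L : ℝ} (hL : 0 ≤ L) :
    ∫ u in (0 : ℝ)..L, (u ^ 2 / 2) ^ p = L ^ (2 * p + 1) / (2 ^ p * (2 * p + 1)) := by
  have h : ∀ u ∈ uIcc 0 L, (u ^ 2 / 2) ^ p = u ^ (2 * p) / 2 ^ p := by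
    intro u hu
    rw [uIcc_of_le hL] at hu
    rw [Real.div_rpow (sq_nonneg u) zero_le_two, ← Real.rpow_natCast, ← Real.rpow_mul hu.1]
    norm_num
  rw [integral_congr h, intervalIntegral.integral_div, integral_rpow (Or.inl hp),
    Real.zero_rpow (by linarith), sub_zero, div_div, mul_comm (2 * p + 1)]

theorem integral_sq_sub_half_rpow {p c d e : ℝ} (hp : -1 < 2 * p) (hcd : c ≤ d)
    (he : e = c ∨ e = d) :
    ∫ t in c..d, ((t - e) ^ 2 / 2) ^ p = (d - c) ^ (2 * p + 1) / (2 ^ p * (2 * p + 1)) := by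
  rcases he with rfl | rfl
  · have h := integral_comp_sub_right (fun u => (u ^ 2 / 2) ^ p) e (a := e) (b := d)
    rw [h, sub_self, integral_sq_half_rpow hp (sub_nonneg.2 hcd)]
  · have h := integral_comp_sub_left (fun u => (u ^ 2 / 2) ^ p) e (a := c) (b := e)
    simp_rw [← neg_sub e, neg_sq]
    rw [h, sub_self, integral_sq_half_rpow hp (sub_nonneg.2 hcd)]

theorem abs_integral_mul_le_Lp_mul_Lq {c d p q : ℝ} {K φ : ℝ → ℝ} (hcd : c ≤ d)
    (hpq : p.HolderConjugate q) (hK : ContinuousOn K (Icc c d)) (hK0 : ∀ t ∈ Icc c d, 0 ≤ K t)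
    (hφ : MemLp φ (ENNReal.ofReal q) (volume.restrict (Ioc c d))) :
    |∫ t in c..d, K t * φ t| ≤
      (∫ t in c..d, K t ^ p) ^ (1 / p) * (∫ t in c..d, |φ t| ^ q) ^ (1 / q) := by
  have hmem : ∀ᵐ t ∂volume.restrict (Ioc c d), t ∈ Icc c d :=
    (ae_restrict_mem measurableSet_Ioc).mono fun t ht => Ioc_subset_Icc_self ht
  obtain ⟨C, hC⟩ := isCompact_Icc.exists_bound_of_continuousOn hK
  have hKLp : MemLp K (ENNReal.ofReal p) (volume.restrict (Ioc c d)) :=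
    MemLp.of_bound ((hK.mono Ioc_subset_Icc_self).aestronglyMeasurable measurableSet_Ioc) C
      (hmem.mono fun t ht => hC t ht)
  simp only [integral_of_le hcd]
  calc |∫ t in Ioc c d, K t * φ t| ≤ ∫ t in Ioc c d, |K t * φ t| :=
        abs_integral_le_integral_abs
    _ = ∫ t in Ioc c d, K t * |φ t| := integral_congr_ae <| hmem.mono fun t ht => by
        simp only [abs_mul, abs_of_nonneg (hK0 t ht)]
    _ ≤ _ := integral_mul_le_Lp_mul_Lq_of_nonneg hpq (hmem.mono hK0)
        (ae_of_all _ fun t => abs_nonneg (φ t)) hKLp hφ.abs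

theorem kernel_holder_constant_eq {p q : ℝ} (hpq : p.HolderConjugate q) (s : ℝ) {L X : ℝ}
    (hL : 0 ≤ L) (hX : 0 ≤ X) :
    (L ^ (2 * p + 1) / (2 ^ p * (2 * p + 1))) ^ (1 / p) * (L * (2 ^ (s - 1) * X ^ q)) ^ (1 / q)
      = 2 ^ ((s - 1) / q) * L ^ 3 / (2 * (2 * p + 1) ^ (1 / p)) * X := by
  have hp := hpq.pos
  have hq := hpq.symm.pos
  have hkernel : (L ^ (2 * p + 1) / (2 ^ p * (2 * p + 1))) ^ (1 / p)
      = L ^ (2 + 1 / p) / (2 * (2 * p + 1) ^ (1 / p)) := by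
    rw [Real.div_rpow (by positivity) (by positivity), Real.mul_rpow (by positivity)
      (by positivity), ← Real.rpow_mul hL, ← Real.rpow_mul zero_le_two]
    congr 2
    · field_simp
    · field_simp; simp
  have hmean : (L * (2 ^ (s - 1) * X ^ q)) ^ (1 / q) = L ^ (1 / q) * 2 ^ ((s - 1) / q) * X := by
    rw [Real.mul_rpow hL (by positivity), Real.mul_rpow (by positivity) (by positivity),
      ← Real.rpow_mul zero_le_two, ← Real.rpow_mul hX, mul_one_div, mul_one_div,
      div_self hq.ne', Real.rpow_one, mul_assoc]
  have hL3 : L ^ (2 + 1 / p) * L ^ (1 / q) = L ^ 3 := by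
    rw [← Real.rpow_add' hL (by positivity), add_assoc, hpq.one_div_add_one_div]
    norm_num
  rw [hkernel, hmean, ← hL3]
  ring

theorem abs_integral_sq_half_mul_le {c d e p q s : ℝ} {φ : ℝ → ℝ} (hcd : c ≤ d)
    (he : e = c ∨ e = d) (hpq : p.HolderConjugate q)
    (hφ : MemLp φ (ENNReal.ofReal q) (volume.restrict (Ioc c d)))
    (hmid : ∀ t ∈ Icc c d, |φ t| ^ q + |φ (c + d - t)| ^ q ≤ 2 ^ s * |φ ((c + d) / 2)| ^ q) :
    |∫ t in c..d, (t - e) ^ 2 / 2 * φ t| ≤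
      2 ^ ((s - 1) / q) * (d - c) ^ 3 / (2 * (2 * p + 1) ^ (1 / p)) * |φ ((c + d) / 2)| := by
  have hq := hpq.symm.pos
  have hφq : IntervalIntegrable (fun t => |φ t| ^ q) volume c d := by
    rw [intervalIntegrable_iff_integrableOn_Ioc_of_le hcd, IntegrableOn]
    simpa only [Real.norm_eq_abs, ENNReal.toReal_ofReal hq.le] using
      hφ.integrable_norm_rpow (by simpa using hq) ENNReal.ofReal_ne_top
  have hLq : ∫ t in c..d, |φ t| ^ q ≤ (d - c) * (2 ^ (s - 1) * |φ ((c + d) / 2)| ^ q) := by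
    refine integral_le_of_add_reflect_le hcd hφq fun t ht => (hmid t ht).trans_eq ?_
    rw [Real.rpow_sub two_pos, Real.rpow_one]
    ring
  calc |∫ t in c..d, (t - e) ^ 2 / 2 * φ t|
      ≤ (∫ t in c..d, ((t - e) ^ 2 / 2) ^ p) ^ (1 / p) * (∫ t in c..d, |φ t| ^ q) ^ (1 / q) :=
        abs_integral_mul_le_Lp_mul_Lq hcd hpq (by fun_prop) (fun t _ => by positivity) hφ
    _ ≤ (∫ t in c..d, ((t - e) ^ 2 / 2) ^ p) ^ (1 / p) *
          ((d - c) * (2 ^ (s - 1) * |φ ((c + d) / 2)| ^ q)) ^ (1 / q) :=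
        mul_le_mul_of_nonneg_left (Real.rpow_le_rpow
          (intervalIntegral.integral_nonneg hcd fun t _ => by positivity) hLq
          (one_div_pos.2 hq).le)
          (Real.rpow_nonneg (intervalIntegral.integral_nonneg hcd fun t _ => by positivity) _)
    _ = _ := by
        rw [integral_sq_sub_half_rpow (by linarith [hpq.pos]) hcd he,
          kernel_holder_constant_eq hpq s (sub_nonneg.2 hcd) (abs_nonneg _)]

theorem integral_sq_half_mul_eq {f f' f'' : ℝ → ℝ} {c x : ℝ}
    (hf' : ∀ t ∈ uIcc c x, HasDerivAt f (f' t) t)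
    (hf'' : ∀ t ∈ uIcc c x, HasDerivAt f' (f'' t) t) (hint : IntervalIntegrable f'' volume c x) :
    ∫ t in c..x, (t - c) ^ 2 / 2 * f'' t =
      (x - c) ^ 2 / 2 * f' x - (x - c) * f x + ∫ t in c..x, f t := by
  have hf : IntervalIntegrable f volume c x :=
    ContinuousOn.intervalIntegrable fun t ht => (hf' t ht).continuousAt.continuousWithinAt
  have hK : IntervalIntegrable (fun t => (t - c) ^ 2 / 2 * f'' t) volume c x :=
    hint.continuousOn_mul (by fun_prop)
  have hFTC := integral_eq_sub_of_hasDerivAt (a := c) (b := x)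
    (f := fun u => (u - c) ^ 2 / 2 * f' u - (u - c) * f u)
    (f' := fun u => (u - c) ^ 2 / 2 * f'' u - f u) (fun t ht => ?_) (hK.sub hf)
  · rw [integral_sub hK hf] at hFTC
    simp only [sub_self, zero_pow two_ne_zero, zero_div, zero_mul, sub_zero] at hFTC
    linarith
  · have hsq : HasDerivAt (fun u => (u - c) ^ 2 / 2) (t - c) t := by
      simpa using (((hasDerivAt_id t).sub_const c).pow 2).div_const 2
    exact ((hsq.mul (hf'' t ht)).sub (((hasDerivAt_id t).sub_const c).mul (hf' t ht)))
      |>.congr_deriv (by simp only [id_eq]; ring)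

theorem integral_sq_half_mul_add_integral_sq_half_mul_eq {f f' f'' : ℝ → ℝ} {c μ d : ℝ}
    (hcd : c ≤ d) (hμ : μ = (c + d) / 2) (hf' : ∀ t ∈ Icc c d, HasDerivAt f (f' t) t)
    (hf'' : ∀ t ∈ Icc c d, HasDerivAt f' (f'' t) t) (hint : IntervalIntegrable f'' volume c d) :
    (∫ t in c..μ, (t - c) ^ 2 / 2 * f'' t) + ∫ t in μ..d, (t - d) ^ 2 / 2 * f'' t =
      (∫ t in c..d, f t) - (d - c) * f μ := by
  have hcμ : c ≤ μ := by linarith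
  have hμd : μ ≤ d := by linarith
  have hleft : uIcc c μ ⊆ Icc c d := by rw [uIcc_of_le hcμ]; exact Icc_subset_Icc_right hμd
  have hright : uIcc d μ ⊆ Icc c d := by rw [uIcc_of_ge hμd]; exact Icc_subset_Icc_left hcμ
  have hL := integral_sq_half_mul_eq (fun t ht => hf' t (hleft ht))
    (fun t ht => hf'' t (hleft ht)) (hint.mono_set (uIcc_subset_uIcc_left (mem_uIcc_of_le hcμ hμd)))
  have hR := integral_sq_half_mul_eq (fun t ht => hf' t (hright ht))
    (fun t ht => hf'' t (hright ht))
    (hint.mono_set (uIcc_subset_uIcc_right (mem_uIcc_of_le hcμ hμd))).symm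
  have hf : ∀ u v, uIcc u v ⊆ Icc c d → IntervalIntegrable f volume u v := fun u v huv =>
    ContinuousOn.intervalIntegrable fun t ht => (hf' t (huv ht)).continuousAt.continuousWithinAt
  rw [integral_symm d μ, hL, hR, ← integral_add_adjacent_intervals (hf c μ hleft)
    ((hf d μ hright).symm), integral_symm d μ, hμ]
  ring

section

variable {a b s p q : ℝ}

theorem abs_integral_sq_half_mul_le_of_sConcaveOn {φ : ℝ → ℝ}
    (hconc : SConcaveOn s (Icc a b) fun t => |φ t| ^ q) (hpq : p.HolderConjugate q)
    (hφ : MemLp φ (ENNReal.ofReal q) (volume.restrict (Icc a b))) {c d e : ℝ} (hac : a ≤ c)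
    (hcd : c ≤ d) (hdb : d ≤ b) (he : e = c ∨ e = d) :
    |∫ t in c..d, (t - e) ^ 2 / 2 * φ t| ≤
      2 ^ ((s - 1) / q) * (d - c) ^ 3 / (2 * (2 * p + 1) ^ (1 / p)) * |φ ((c + d) / 2)| := by
  refine abs_integral_sq_half_mul_le hcd he hpq (hφ.mono_measure (Measure.restrict_mono
    (Ioc_subset_Icc_self.trans (Icc_subset_Icc hac hdb)) le_rfl)) fun t ht => ?_
  have h := hconc.add_le_two_rpow_mul_midpoint (x := t) (y := c + d - t)
    ⟨by linarith [ht.1], by linarith [ht.2]⟩ ⟨by linarith [ht.2], by linarith [ht.1]⟩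
  rwa [show (t + (c + d - t)) / 2 = (c + d) / 2 by ring] at h

theorem abs_integral_sub_mul_midpoint_le {f f' f'' : ℝ → ℝ}
    (hconc : SConcaveOn s (Icc a b) fun t => |f'' t| ^ q) (hpq : p.HolderConjugate q)
    (hLq : MemLp f'' (ENNReal.ofReal q) (volume.restrict (Icc a b)))
    (hf' : ∀ t ∈ Icc a b, HasDerivAt f (f' t) t) (hf'' : ∀ t ∈ Icc a b, HasDerivAt f' (f'' t) t)
    (hint : IntervalIntegrable f'' volume a b) {c μ d : ℝ} (hac : a ≤ c) (hcd : c ≤ d)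
    (hdb : d ≤ b) (hμ : μ = (c + d) / 2) :
    |(∫ t in c..d, f t) - (d - c) * f μ| ≤ 2 ^ ((s - 1) / q) * (d - c) ^ 3 /
      (16 * (2 * p + 1) ^ (1 / p)) * (|f'' ((c + μ) / 2)| + |f'' ((μ + d) / 2)|) := by
  have hsub : Icc c d ⊆ Icc a b := Icc_subset_Icc hac hdb
  have hcμ : c ≤ μ := by linarith
  have hμd : μ ≤ d := by linarith
  rw [← integral_sq_half_mul_add_integral_sq_half_mul_eq hcd hμ (fun t ht => hf' t (hsub ht))
    (fun t ht => hf'' t (hsub ht)) (hint.mono_set (by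
      rw [uIcc_of_le hcd, uIcc_of_le (hac.trans (hcd.trans hdb))]; exact hsub))]
  calc _ ≤ _ := abs_add_le _ _
    _ ≤ _ := add_le_add
        (abs_integral_sq_half_mul_le_of_sConcaveOn hconc hpq hLq hac hcμ (hμd.trans hdb)
          (Or.inl rfl))
        (abs_integral_sq_half_mul_le_of_sConcaveOn hconc hpq hLq (hac.trans hcμ) hμd hdb
          (Or.inr rfl))
    _ = _ := by subst hμ; ring

theorem abs_average_sub_two_point_le {f f' f'' : ℝ → ℝ} (hab : a < b)
    (hconc : SConcaveOn s (Icc a b) fun t => |f'' t| ^ q) (hpq : p.HolderConjugate q)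
    (hLq : MemLp f'' (ENNReal.ofReal q) (volume.restrict (Icc a b)))
    (hf' : ∀ t ∈ Icc a b, HasDerivAt f (f' t) t) (hf'' : ∀ t ∈ Icc a b, HasDerivAt f' (f'' t) t)
    (hint : IntervalIntegrable f'' volume a b) :
    |(1 / (b - a) * ∫ t in a..b, f t) - 1 / 2 * (f ((3 * a + b) / 4) + f ((a + 3 * b) / 4))| ≤
      2 ^ ((s - 1) / q) * (b - a) ^ 2 / (128 * (2 * p + 1) ^ (1 / p)) *
        (|f'' ((7 * a + b) / 8)| + |f'' ((5 * a + 3 * b) / 8)| + |f'' ((3 * a + 5 * b) / 8)| +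
          |f'' ((a + 7 * b) / 8)|) := by
  have hleft := abs_integral_sub_mul_midpoint_le hconc hpq hLq hf' hf'' hint (c := a)
    (μ := (3 * a + b) / 4) (d := (a + b) / 2) le_rfl (by linarith) (by linarith) (by ring)
  have hright := abs_integral_sub_mul_midpoint_le hconc hpq hLq hf' hf'' hint
    (c := (a + b) / 2) (μ := (a + 3 * b) / 4) (d := b) (by linarith) (by linarith) le_rfl (by ring)
  rw [show (a + (3 * a + b) / 4) / 2 = (7 * a + b) / 8 by ring,
    show ((3 * a + b) / 4 + (a + b) / 2) / 2 = (5 * a + 3 * b) / 8 by ring,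
    show (a + b) / 2 - a = (b - a) / 2 by ring] at hleft
  rw [show ((a + b) / 2 + (a + 3 * b) / 4) / 2 = (3 * a + 5 * b) / 8 by ring,
    show ((a + 3 * b) / 4 + b) / 2 = (a + 7 * b) / 8 by ring,
    show b - (a + b) / 2 = (b - a) / 2 by ring] at hright
  have hf : ContinuousOn f (Icc a b) := fun t ht => (hf' t ht).continuousAt.continuousWithinAt
  have hfi : ∀ u v, a ≤ u → u ≤ v → v ≤ b → IntervalIntegrable f volume u v :=
    fun u v hau huv hvb =>
      (hf.mono (by rw [uIcc_of_le huv]; exact Icc_subset_Icc hau hvb)).intervalIntegrable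
  rw [← integral_add_adjacent_intervals (hfi a ((a + b) / 2) le_rfl (by linarith) (by linarith))
    (hfi ((a + b) / 2) b (by linarith) (by linarith) le_rfl)]
  set I₁ := ∫ t in a..(a + b) / 2, f t
  set I₂ := ∫ t in (a + b) / 2..b, f t
  have hba : 0 < b - a := by linarith
  rw [show 1 / (b - a) * (I₁ + I₂) - 1 / 2 * (f ((3 * a + b) / 4) + f ((a + 3 * b) / 4)) =
      ((I₁ - (b - a) / 2 * f ((3 * a + b) / 4)) + (I₂ - (b - a) / 2 * f ((a + 3 * b) / 4))) /
        (b - a) by field_simp; ring, abs_div, abs_of_pos hba, div_le_iff₀ hba]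
  calc _ ≤ _ := abs_add_le _ _
    _ ≤ _ := add_le_add hleft hright
    _ = _ := by ring

end

theorem stmt15_general (a b : ℝ) (hab : a < b) (f f' f'' : ℝ → ℝ)
    (hf' : ∀ t ∈ Set.Icc a b, HasDerivAt f (f' t) t)
    (hf'' : ∀ t ∈ Set.Icc a b, HasDerivAt f' (f'' t) t)
    (hint : IntervalIntegrable f'' volume a b)
    (s : ℝ) (hs1 : s ≤ 1)
    (p q : ℝ) (hp : 1 < p) (hpq : 1 / p + 1 / q = 1)
    (hconc : SConcaveOn s (Set.Icc a b) (fun t => |f'' t| ^ q)) :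
    |((1 / (b - a)) * ∫ t in a..b, f t) - (1 / 2) * (f ((3 * a + b) / 4) + f ((a + 3 * b) / 4))|
      ≤ (2 : ℝ) ^ ((s - 1) / q) * (b - a) ^ 2 / (128 * (2 * p + 1) ^ (1 / p)) *
          (|f'' ((7 * a + b) / 8)| + 2 * |f'' ((a + b) / 2)| + |f'' ((a + 7 * b) / 8)|) := by
  have hpq' : p.HolderConjugate q :=
    Real.holderConjugate_iff.2 ⟨hp, by simpa only [one_div] using hpq⟩
  have hLq :=
    hconc.memLp hpq'.symm.pos (aestronglyMeasurable_of_hasDerivAt measurableSet_Icc hf'')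
  have hmid := hconc.abs_add_abs_le hs1 hpq'.symm.lt.le (x := (5 * a + 3 * b) / 8)
    (y := (3 * a + 5 * b) / 8) ⟨by linarith, by linarith⟩ ⟨by linarith, by linarith⟩
  rw [show ((5 * a + 3 * b) / 8 + (3 * a + 5 * b) / 8) / 2 = (a + b) / 2 by ring] at hmid
  calc _ ≤ _ := abs_average_sub_two_point_le hab hconc hpq' hLq hf' hf'' hint
    _ ≤ _ := mul_le_mul_of_nonneg_left (by linarith) (by positivity)

theorem stmt15 (a b : ℝ) (ha : 0 ≤ a) (hab : a < b) (f f' f'' : ℝ → ℝ)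
    (hf' : ∀ t ∈ Set.Icc a b, HasDerivAt f (f' t) t)
    (hf'' : ∀ t ∈ Set.Icc a b, HasDerivAt f' (f'' t) t)
    (hint : IntervalIntegrable f'' volume a b)
    (s : ℝ) (hs0 : 0 < s) (hs1 : s ≤ 1)
    (p q : ℝ) (hp : 1 < p) (hq : 1 < q) (hpq : 1 / p + 1 / q = 1)
    (hconc : SConcaveOn s (Set.Icc a b) (fun t => |f'' t| ^ q)) :
    |((1 / (b - a)) * ∫ t in a..b, f t) - (1 / 2) * (f ((3 * a + b) / 4) + f ((a + 3 * b) / 4))|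
      ≤ (2 : ℝ) ^ ((s - 1) / q) * (b - a) ^ 2 / (128 * (2 * p + 1) ^ (1 / p)) *
          (|f'' ((7 * a + b) / 8)| + 2 * |f'' ((a + b) / 2)| + |f'' ((a + 7 * b) / 8)|) :=
  stmt15_general a b hab f f' f'' hf' hf'' hint s hs1 p q hp hpq hconc
end

section
/- Let 0 < a < b and 0 < s < 1. Then |L_s^s(a,b) − A(a,b)^s| ≤ ((b−a)² s(1−s)/(8(s+1)(s+2)(s+3)))[a^{s−2} + (s²+3s+2) A(a,b)^{s−2} + b^{s−2}], and |L_s^s(a,b) − A(((3a+b)/4)^s, ((a+3b)/4)^s)| ≤ ((b−a)² s(1−s)/(8(s+1)(s+2)(s+3)))[2(a^{s−2} + b^{s−2}) + (3s²+5s+6)(((3a+b)/4)^{s−2} + ((a+3b)/4)^{s−2})]. (Here s(1−s) = |s(s−1)| is the absolute value of the second derivative coefficient of x ↦ x^s.) -/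
/-!
The midpoint-rule error on `[c - h, c + h]`, `φ h = F (c + h) - F (c - h) - 2 h f c` with `F' = f`,
vanishes to second order at `h = 0` and has third derivative `f'' (c + h) + f'' (c - h)`. If
`|f''| ≤ M` with `M` convex, the chord bounds on `M` give
`|φ''' h| ≤ 2 M c + (M (c - H) + M (c + H) - 2 M c) h / H`, and integrating three times yields
`|φ H| ≤ (2H)³ (M (c - H) + 6 M c + M (c + H)) / 192`.

For `f x = x ^ s` take `M x = s (1 - s) x ^ (s - 2)`, which is convex as `s - 2 < 0`. The second
estimate applies this on both halves of `[a, b]` and uses that `x ^ (s - 2)` is decreasing. The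
stated constants follow since `(s + 1) (s + 2) (s + 3) ≤ 24` for `s ≤ 1`.
-/

open Set

lemma nonneg_of_hasDerivAt_nonneg {g g' : ℝ → ℝ} {a b : ℝ} (ha : 0 ≤ g a)
    (hg : ∀ x ∈ Icc a b, HasDerivAt g (g' x) x) (hg' : ∀ x ∈ Icc a b, 0 ≤ g' x) :
    ∀ x ∈ Icc a b, 0 ≤ g x := by
  have hmono : MonotoneOn g (Icc a b) :=
    monotoneOn_of_hasDerivWithinAt_nonneg (convex_Icc a b)
      (fun x hx ↦ (hg x hx).continuousAt.continuousWithinAt)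
      (fun x hx ↦ (hg x (interior_subset hx)).hasDerivWithinAt)
      (fun x hx ↦ hg' x (interior_subset hx))
  exact fun x hx ↦ ha.trans (hmono (left_mem_Icc.2 (hx.1.trans hx.2)) hx hx.1)

lemma le_of_deriv3_le_affine {φ φ₁ φ₂ φ₃ : ℝ → ℝ} {α β H : ℝ} (hH : 0 ≤ H)
    (h₀ : φ 0 = 0) (h₁ : φ₁ 0 = 0) (h₂ : φ₂ 0 = 0)
    (hφ : ∀ h ∈ Icc 0 H, HasDerivAt φ (φ₁ h) h) (hφ₁ : ∀ h ∈ Icc 0 H, HasDerivAt φ₁ (φ₂ h) h)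
    (hφ₂ : ∀ h ∈ Icc 0 H, HasDerivAt φ₂ (φ₃ h) h) (hφ₃ : ∀ h ∈ Icc 0 H, φ₃ h ≤ α + β * h) :
    φ H ≤ α * H ^ 3 / 6 + β * H ^ 4 / 24 := by
  have hpow : ∀ (n : ℕ) (γ h : ℝ), HasDerivAt (fun h ↦ γ * h ^ (n + 1)) (γ * (n + 1) * h ^ n) h :=
    fun n γ h ↦ by simpa [mul_assoc] using (hasDerivAt_pow (n + 1) h).const_mul γ
  have g₂ := nonneg_of_hasDerivAt_nonneg (g := fun h ↦ α * h ^ 1 + β / 2 * h ^ 2 - φ₂ h)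
    (by simp [h₂]) (fun h hh ↦ ((hpow 0 α h).add (hpow 1 (β / 2) h)).sub (hφ₂ h hh))
    (fun h hh ↦ by norm_num; linarith [hφ₃ h hh])
  have g₁ := nonneg_of_hasDerivAt_nonneg (g := fun h ↦ α / 2 * h ^ 2 + β / 6 * h ^ 3 - φ₁ h)
    (by simp [h₁]) (fun h hh ↦ ((hpow 1 (α / 2) h).add (hpow 2 (β / 6) h)).sub (hφ₁ h hh))
    (fun h hh ↦ by convert g₂ h hh using 1; push_cast; ring)
  have g₀ := nonneg_of_hasDerivAt_nonneg (g := fun h ↦ α / 6 * h ^ 3 + β / 24 * h ^ 4 - φ h)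
    (by simp [h₀]) (fun h hh ↦ ((hpow 2 (α / 6) h).add (hpow 3 (β / 24) h)).sub (hφ h hh))
    (fun h hh ↦ by convert g₁ h hh using 1; push_cast; ring)
  linarith [g₀ H ⟨hH, le_rfl⟩]

lemma abs_le_of_abs_deriv3_le_affine {φ φ₁ φ₂ φ₃ : ℝ → ℝ} {α β H : ℝ} (hH : 0 ≤ H)
    (h₀ : φ 0 = 0) (h₁ : φ₁ 0 = 0) (h₂ : φ₂ 0 = 0)
    (hφ : ∀ h ∈ Icc 0 H, HasDerivAt φ (φ₁ h) h) (hφ₁ : ∀ h ∈ Icc 0 H, HasDerivAt φ₁ (φ₂ h) h)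
    (hφ₂ : ∀ h ∈ Icc 0 H, HasDerivAt φ₂ (φ₃ h) h) (hφ₃ : ∀ h ∈ Icc 0 H, |φ₃ h| ≤ α + β * h) :
    |φ H| ≤ α * H ^ 3 / 6 + β * H ^ 4 / 24 := by
  refine abs_le.2 ⟨?_, le_of_deriv3_le_affine hH h₀ h₁ h₂ hφ hφ₁ hφ₂
    fun h hh ↦ (le_abs_self _).trans (hφ₃ h hh)⟩
  have := le_of_deriv3_le_affine (φ := fun h ↦ -φ h) (φ₁ := fun h ↦ -φ₁ h) (φ₂ := fun h ↦ -φ₂ h)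
    (φ₃ := fun h ↦ -φ₃ h) hH (by simp [h₀]) (by simp [h₁]) (by simp [h₂])
    (fun h hh ↦ (hφ h hh).neg) (fun h hh ↦ (hφ₁ h hh).neg) (fun h hh ↦ (hφ₂ h hh).neg)
    (fun h hh ↦ (neg_le_abs _).trans (hφ₃ h hh))
  linarith

lemma ConvexOn.map_add_mul_sub_le {M : ℝ → ℝ} {D : Set ℝ} (hM : ConvexOn ℝ D M) {x y t : ℝ}
    (hx : x ∈ D) (hy : y ∈ D) (ht : t ∈ Icc 0 1) : M (x + t * (y - x)) ≤ M x + t * (M y - M x) := by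
  have := hM.2 hx hy (sub_nonneg.2 ht.2) ht.1 (sub_add_cancel 1 t)
  simp only [smul_eq_mul] at this
  rw [show x + t * (y - x) = (1 - t) * x + t * y by ring]
  linarith

lemma ConvexOn.map_add_add_map_sub_le {M : ℝ → ℝ} {c H h : ℝ}
    (hM : ConvexOn ℝ (Icc (c - H) (c + H)) M) (hH : 0 < H) (hh : h ∈ Icc 0 H) :
    M (c + h) + M (c - h) ≤ 2 * M c + (M (c - H) + M (c + H) - 2 * M c) / H * h := by
  have ht : h / H ∈ Icc 0 1 := ⟨div_nonneg hh.1 hH.le, (div_le_one hH).2 hh.2⟩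
  have hc : c ∈ Icc (c - H) (c + H) := ⟨by linarith, by linarith⟩
  have hplus := hM.map_add_mul_sub_le hc (right_mem_Icc.2 (by linarith)) ht
  have hminus := hM.map_add_mul_sub_le hc (left_mem_Icc.2 (by linarith)) ht
  rw [add_sub_cancel_left, div_mul_cancel₀ _ hH.ne'] at hplus
  rw [sub_sub_cancel_left, mul_neg, div_mul_cancel₀ _ hH.ne', ← sub_eq_add_neg] at hminus
  have : (M (c - H) + M (c + H) - 2 * M c) / H * h =
      h / H * (M (c + H) - M c) + h / H * (M (c - H) - M c) := by ring
  linarith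

theorem abs_midpoint_rule_error_le {F f f' f'' M : ℝ → ℝ} {u v : ℝ} (huv : u ≤ v)
    (hF : ∀ x ∈ Icc u v, HasDerivAt F (f x) x) (hf : ∀ x ∈ Icc u v, HasDerivAt f (f' x) x)
    (hf' : ∀ x ∈ Icc u v, HasDerivAt f' (f'' x) x) (hM : ConvexOn ℝ (Icc u v) M)
    (hf''M : ∀ x ∈ Icc u v, |f'' x| ≤ M x) :
    |F v - F u - (v - u) * f ((u + v) / 2)| ≤
      (v - u) ^ 3 / 192 * (M u + 6 * M ((u + v) / 2) + M v) := by
  obtain ⟨c, H, rfl, rfl⟩ : ∃ c H, u = c - H ∧ v = c + H :=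
    ⟨(u + v) / 2, (v - u) / 2, by ring, by ring⟩
  rw [show (c - H + (c + H)) / 2 = c by ring, show c + H - (c - H) = 2 * H by ring]
  rcases (show 0 ≤ H by linarith).eq_or_lt with rfl | hH
  · simp
  have hplus : ∀ h ∈ Icc 0 H, c + h ∈ Icc (c - H) (c + H) :=
    fun h hh ↦ ⟨by linarith [hh.1], by linarith [hh.2]⟩
  have hminus : ∀ h ∈ Icc 0 H, c - h ∈ Icc (c - H) (c + H) :=
    fun h hh ↦ ⟨by linarith [hh.2], by linarith [hh.1]⟩
  have key := abs_le_of_abs_deriv3_le_affine (φ := fun h ↦ F (c + h) - F (c - h) - h * (2 * f c))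
    (φ₁ := fun h ↦ f (c + h) + f (c - h) - 2 * f c) (φ₂ := fun h ↦ f' (c + h) - f' (c - h))
    (φ₃ := fun h ↦ f'' (c + h) + f'' (c - h)) hH.le (by simp) (by simp; ring) (by simp)
    (fun h hh ↦ (((hF _ (hplus h hh)).comp_const_add c h).sub
      ((hF _ (hminus h hh)).comp_const_sub c h) |>.sub (hasDerivAt_mul_const (2 * f c))).congr_deriv
        (by ring))
    (fun h hh ↦ (((hf _ (hplus h hh)).comp_const_add c h).add
      ((hf _ (hminus h hh)).comp_const_sub c h) |>.sub_const (2 * f c)).congr_deriv (by ring))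
    (fun h hh ↦ (((hf' _ (hplus h hh)).comp_const_add c h).sub
      ((hf' _ (hminus h hh)).comp_const_sub c h)).congr_deriv (by ring))
    (fun h hh ↦ (abs_add_le _ _).trans <|
      (add_le_add (hf''M _ (hplus h hh)) (hf''M _ (hminus h hh))).trans
        (hM.map_add_add_map_sub_le hH hh))
  calc |F (c + H) - F (c - H) - 2 * H * f c|
      = |F (c + H) - F (c - H) - H * (2 * f c)| := by ring_nf
    _ ≤ _ := key
    _ = _ := by field_simp; ring

lemma convexOn_rpow_of_nonpos {p : ℝ} (hp : p ≤ 0) : ConvexOn ℝ (Ioi 0) fun x : ℝ ↦ x ^ p := by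
  refine convexOn_of_hasDerivWithinAt2_nonneg (convex_Ioi 0) (f' := fun x ↦ p * x ^ (p - 1))
    (f'' := fun x ↦ p * ((p - 1) * x ^ (p - 1 - 1)))
    (fun x hx ↦ (Real.continuousAt_rpow_const x p (Or.inl hx.ne')).continuousWithinAt) ?_ ?_ ?_ <;>
    rw [interior_Ioi] <;> intro x hx
  · exact (Real.hasDerivAt_rpow_const (Or.inl (ne_of_gt hx))).hasDerivWithinAt
  · exact ((Real.hasDerivAt_rpow_const (Or.inl (ne_of_gt hx))).const_mul p).hasDerivWithinAt
  · have := Real.rpow_pos_of_pos hx (p - 1 - 1)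
    have : 0 ≤ p * (p - 1) := mul_nonneg_of_nonpos_of_nonpos hp (by linarith)
    rw [← mul_assoc]
    positivity

theorem abs_rpow_midpoint_rule_error_le {s u v : ℝ} (hs : s ≠ -1) (hs2 : s ≤ 2) (hu : 0 < u)
    (huv : u ≤ v) :
    |(v ^ (s + 1) - u ^ (s + 1)) / (s + 1) - (v - u) * ((u + v) / 2) ^ s| ≤
      (v - u) ^ 3 / 192 * |s * (s - 1)| *
        (u ^ (s - 2) + 6 * ((u + v) / 2) ^ (s - 2) + v ^ (s - 2)) := by
  have hpos : ∀ x ∈ Icc u v, 0 < x := fun x hx ↦ hu.trans_le hx.1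
  have hs1 : s + 1 ≠ 0 := fun h ↦ hs (by linarith)
  have key := abs_midpoint_rule_error_le (F := fun x ↦ x ^ (s + 1) / (s + 1)) (f := fun x ↦ x ^ s)
    (f' := fun x ↦ s * x ^ (s - 1)) (f'' := fun x ↦ s * ((s - 1) * x ^ (s - 1 - 1)))
    (M := fun x ↦ |s * (s - 1)| * x ^ (s - 2)) huv
    (fun x hx ↦ ((Real.hasDerivAt_rpow_const (p := s + 1) (Or.inl (hpos x hx).ne')).div_const
      (s + 1)).congr_deriv (by rw [add_sub_cancel_right, mul_div_cancel_left₀ _ hs1]))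
    (fun x hx ↦ Real.hasDerivAt_rpow_const (Or.inl (hpos x hx).ne'))
    (fun x hx ↦ (Real.hasDerivAt_rpow_const (Or.inl (hpos x hx).ne')).const_mul s)
    (((convexOn_rpow_of_nonpos (by linarith)).subset (fun x hx ↦ hu.trans_le hx.1)
      (convex_Icc u v)).smul (abs_nonneg _))
    (fun x hx ↦ by
      rw [show s - 1 - 1 = s - 2 by ring, ← mul_assoc, abs_mul,
        abs_of_pos (Real.rpow_pos_of_pos (hpos x hx) _)])
  convert key using 1
  · congr 1
    rw [sub_div]
  · ring

theorem abs_rpow_mean_sub_midpoint_le {s u v : ℝ} (hs : s ≠ -1) (hs2 : s ≤ 2) (hu : 0 < u)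
    (huv : u < v) :
    |(v ^ (s + 1) - u ^ (s + 1)) / ((v - u) * (s + 1)) - ((u + v) / 2) ^ s| ≤
      (v - u) ^ 2 / 192 * |s * (s - 1)| *
        (u ^ (s - 2) + 6 * ((u + v) / 2) ^ (s - 2) + v ^ (s - 2)) := by
  have hvu : 0 < v - u := sub_pos.2 huv
  have hs1 : s + 1 ≠ 0 := fun h ↦ hs (by linarith)
  rw [show (v ^ (s + 1) - u ^ (s + 1)) / ((v - u) * (s + 1)) - ((u + v) / 2) ^ s =
      ((v ^ (s + 1) - u ^ (s + 1)) / (s + 1) - (v - u) * ((u + v) / 2) ^ s) / (v - u) by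
    field_simp, abs_div, abs_of_pos hvu, div_le_iff₀ hvu]
  refine (abs_rpow_midpoint_rule_error_le hs hs2 hu huv.le).trans (le_of_eq ?_)
  ring

theorem abs_rpow_mean_sub_two_point_le {s u v : ℝ} (hs : s ≠ -1) (hs2 : s ≤ 2) (hu : 0 < u)
    (huv : u < v) :
    |(v ^ (s + 1) - u ^ (s + 1)) / ((v - u) * (s + 1)) -
        (((3 * u + v) / 4) ^ s + ((u + 3 * v) / 4) ^ s) / 2| ≤
      (v - u) ^ 2 / 1536 * |s * (s - 1)| *
        (u ^ (s - 2) + 6 * ((3 * u + v) / 4) ^ (s - 2) + 2 * ((u + v) / 2) ^ (s - 2) +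
          6 * ((u + 3 * v) / 4) ^ (s - 2) + v ^ (s - 2)) := by
  set m := (u + v) / 2 with hm
  have hvu : 0 < v - u := sub_pos.2 huv
  have hs1 : s + 1 ≠ 0 := fun h ↦ hs (by linarith)
  have hleft := abs_rpow_midpoint_rule_error_le hs hs2 hu (show u ≤ m by linarith)
  have hright := abs_rpow_midpoint_rule_error_le hs hs2 (show 0 < m by linarith)
    (show m ≤ v by linarith)
  rw [show (u + m) / 2 = (3 * u + v) / 4 by ring] at hleft
  rw [show (m + v) / 2 = (u + 3 * v) / 4 by ring] at hright
  rw [show (v ^ (s + 1) - u ^ (s + 1)) / ((v - u) * (s + 1)) -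
        (((3 * u + v) / 4) ^ s + ((u + 3 * v) / 4) ^ s) / 2 =
      (((m ^ (s + 1) - u ^ (s + 1)) / (s + 1) - (m - u) * ((3 * u + v) / 4) ^ s) +
        ((v ^ (s + 1) - m ^ (s + 1)) / (s + 1) - (v - m) * ((u + 3 * v) / 4) ^ s)) / (v - u) by
    field_simp; ring, abs_div, abs_of_pos hvu, div_le_iff₀ hvu]
  refine (abs_add_le _ _).trans ((add_le_add hleft hright).trans (le_of_eq ?_))
  ring

lemma add_one_mul_add_two_mul_add_three_le {s : ℝ} (hs : s ≤ 1) :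
    (s + 1) * (s + 2) * (s + 3) ≤ 24 := by
  nlinarith [mul_nonneg (sub_nonneg.2 hs) (by positivity : 0 ≤ (s + 7 / 2) ^ 2 + 23 / 4)]

lemma midpoint_constant_le {s K A M B : ℝ} (hs0 : 0 ≤ s) (hs1 : s ≤ 1) (hK : 0 ≤ K) (hA : 0 ≤ A)
    (hM : 0 ≤ M) (hB : 0 ≤ B) :
    K * ((A + 6 * M + B) / 192) ≤
      K / (8 * (s + 1) * (s + 2) * (s + 3)) * (A + (s ^ 2 + 3 * s + 2) * M + B) := by
  have hP := add_one_mul_add_two_mul_add_three_le hs1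
  have hM' : 0 ≤ (s + 1) * (s + 2) * (1 - s) * M := by
    have : 0 ≤ (s + 1) * (s + 2) * (1 - s) := by nlinarith
    positivity
  rw [div_mul_eq_mul_div, mul_div_assoc]
  refine mul_le_mul_of_nonneg_left ?_ hK
  rw [div_le_div_iff₀ (by norm_num) (by positivity)]
  nlinarith [mul_nonneg (sub_nonneg.2 hP) hA, mul_nonneg (sub_nonneg.2 hP) hB]

lemma two_point_constant_le {s K A Q₁ m Q₂ B : ℝ} (hs0 : 0 ≤ s) (hs1 : s ≤ 1) (hK : 0 ≤ K)
    (hA : 0 ≤ A) (hQ₁ : 0 ≤ Q₁) (hm : m ≤ Q₁) (hQ₂ : 0 ≤ Q₂) (hB : 0 ≤ B) :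
    K * ((A + 6 * Q₁ + 2 * m + 6 * Q₂ + B) / 1536) ≤
      K / (8 * (s + 1) * (s + 2) * (s + 3)) *
        (2 * (A + B) + (3 * s ^ 2 + 5 * s + 6) * (Q₁ + Q₂)) := by
  have hP := add_one_mul_add_two_mul_add_three_le hs1
  rw [div_mul_eq_mul_div, mul_div_assoc]
  refine mul_le_mul_of_nonneg_left ?_ hK
  rw [div_le_div_iff₀ (by norm_num) (by positivity)]
  nlinarith [mul_nonneg (sub_nonneg.2 hP) hA, mul_nonneg (sub_nonneg.2 hP) hB,
    mul_nonneg (sub_nonneg.2 hP) hQ₁, mul_nonneg (sub_nonneg.2 hP) hQ₂,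
    mul_nonneg (by positivity : (0 : ℝ) ≤ (s + 1) * (s + 2) * (s + 3)) (sub_nonneg.2 hm)]

theorem stmt17 (a b s : ℝ) (ha : 0 < a) (hab : a < b) (hs0 : 0 < s) (hs1 : s < 1) :
    |((b ^ (s + 1) - a ^ (s + 1)) / ((b - a) * (s + 1))) - ((a + b) / 2) ^ s|
        ≤ (b - a) ^ 2 * s * (1 - s) / (8 * (s + 1) * (s + 2) * (s + 3)) *
            (a ^ (s - 2) + (s ^ 2 + 3 * s + 2) * ((a + b) / 2) ^ (s - 2) + b ^ (s - 2)) ∧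
      |((b ^ (s + 1) - a ^ (s + 1)) / ((b - a) * (s + 1))) - (((3 * a + b) / 4) ^ s + ((a + 3 * b) / 4) ^ s) / 2|
        ≤ (b - a) ^ 2 * s * (1 - s) / (8 * (s + 1) * (s + 2) * (s + 3)) *
            (2 * (a ^ (s - 2) + b ^ (s - 2))
              + (3 * s ^ 2 + 5 * s + 6) * (((3 * a + b) / 4) ^ (s - 2) + ((a + 3 * b) / 4) ^ (s - 2))) := by
  have hs : |s * (s - 1)| = s * (1 - s) := by
    rw [abs_of_nonpos (mul_nonpos_of_nonneg_of_nonpos hs0.le (by linarith))]; ring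
  have hK : 0 ≤ (b - a) ^ 2 * s * (1 - s) := by
    have := sub_pos.2 hs1
    positivity
  have hnonneg : ∀ x : ℝ, 0 < x → 0 ≤ x ^ (s - 2) := fun x hx ↦ (Real.rpow_pos_of_pos hx _).le
  constructor
  · refine (abs_rpow_mean_sub_midpoint_le (by linarith) (by linarith) ha hab).trans ?_
    refine le_trans (le_of_eq ?_) (midpoint_constant_le hs0.le hs1.le hK (hnonneg a ha)
      (hnonneg _ (by linarith)) (hnonneg b (by linarith)))
    rw [hs]; ring
  · refine (abs_rpow_mean_sub_two_point_le (by linarith) (by linarith) ha hab).trans ?_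
    refine le_trans (le_of_eq ?_) (two_point_constant_le hs0.le hs1.le hK (hnonneg a ha)
      (hnonneg _ (by linarith)) (Real.rpow_le_rpow_of_nonpos (by linarith)
        (show (3 * a + b) / 4 ≤ (a + b) / 2 by linarith) (by linarith))
      (hnonneg _ (by linarith)) (hnonneg b (by linarith)))
    rw [hs]; ring
end
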